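/- In the asymptotic zone u_1 ≪ u_2 ≪ ... ≪ u_n ≪ v_n ≪ ... ≪ v_1, each summand U_k of the left-hand side of the hypergeometric identity tends to ∏_{i=1}^n ([qt;q]_{k_i}/[q;q]_{k_i}) · t^{(1/2)((n−1)k_1 + (n−3)k_2 + ... + (1−n)k_n)} · t^{−nK/2}. Formally: the limit of U_k(s^{a_1}u_1, ..., s^{a_n}u_n; s^{b_1}v_1,...,s^{b_n}v_n) as s → 0+, for exponents a_1 > a_2 > ... > a_n > b_n > ... > b_1, equals this expression, independent of u, v. -/

import Mathlib

/-!
Each factor of a symmetric q-Pochhammer symbol has the shape `f(z) = α z - β z⁻¹` (in the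
square-root variable), so `f(ρ z) / f(z)` tends to `ρ⁻¹` as `z → 0` and to `ρ` as `z → ∞`.
Along the scaling, `u_i / u_j → 0` for `i < j`, `u_i / u_j → ∞` for `i > j` and `u_j / v_a → 0`
always. Hence the `(i, j)` cross factor contributes `t^{k_i/2}` or `t^{-k_i/2}` according as
`i < j` or `i > j`, every `(u_j, v_a)` factor contributes `t^{-k_j/2}`, and counting the signs
gives the exponent.
-/

open Finset

/-- The symmetric q-Pochhammer symbol `[z;q]_k` in terms of fixed square roots
`s = q^{1/2}` and `w = z^{1/2}`. -/
noncomputable def symPoch (s w : ℂ) (k : ℤ) : ℂ :=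
  if 0 ≤ k then ∏ j ∈ Finset.range k.toNat, (s ^ (j : ℤ) * w - s ^ (-(j : ℤ)) * w⁻¹)
  else (∏ j ∈ Finset.range (-k).toNat, (s ^ ((j : ℤ) + 1) * w - s ^ (-(j : ℤ) - 1) * w⁻¹))⁻¹

/-- Summand `U_k(u;v)` of the left-hand side of the hypergeometric identity, in the
square-root variables `s = q^{1/2}`, `r = t^{1/2}`, `w i = u_i^{1/2}`, `x a = v_a^{1/2}`. -/
noncomputable def Ufun (n : ℕ) (s r : ℂ) (w x : Fin n → ℂ) (k : Fin n → ℕ) : ℂ :=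
  (∏ i, symPoch s (s * r) (k i) / symPoch s s (k i)) *
  (∏ i, ∏ j ∈ ({i}ᶜ : Finset (Fin n)),
    symPoch s (r⁻¹ * s ^ (-(k j : ℤ)) * w i / w j) (k i) /
      symPoch s (s ^ (-(k j : ℤ)) * w i / w j) (k i)) *
  (∏ a, ∏ j, symPoch s (r * w j / x a) (k j) / symPoch s (w j / x a) (k j))

open Filter Topology Bornology

lemma symPoch_natCast (s w : ℂ) (m : ℕ) :
    symPoch s w m = ∏ j ∈ range m, (s ^ (j : ℤ) * w - s ^ (-(j : ℤ)) * w⁻¹) := by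
  simp [symPoch]

section Limits

variable {α β ρ : ℂ}

lemma tendsto_mul_sub_inv_div_nhdsNE_zero (hβ : β ≠ 0) (hρ : ρ ≠ 0) :
    Tendsto (fun z : ℂ => (α * (ρ * z) - β * (ρ * z)⁻¹) / (α * z - β * z⁻¹))
      (𝓝[≠] 0) (𝓝 ρ⁻¹) := by
  have hcont : ContinuousAt (fun z : ℂ => (α * ρ ^ 2 * z ^ 2 - β) / (ρ * (α * z ^ 2 - β))) 0 :=
    ContinuousAt.div (by fun_prop) (by fun_prop) (by simp [hβ, hρ])
  have hval : (α * ρ ^ 2 * 0 ^ 2 - β) / (ρ * (α * 0 ^ 2 - β)) = ρ⁻¹ := by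
    simp [div_mul_cancel_right₀ hβ]
  rw [← hval]
  refine (hcont.tendsto.mono_left nhdsWithin_le_nhds).congr' ?_
  filter_upwards [self_mem_nhdsWithin] with z (hz : z ≠ 0)
  field_simp

lemma tendsto_mul_sub_inv_div_cobounded (hα : α ≠ 0) (hρ : ρ ≠ 0) :
    Tendsto (fun z : ℂ => (α * (ρ * z) - β * (ρ * z)⁻¹) / (α * z - β * z⁻¹))
      (cobounded ℂ) (𝓝 ρ) := by
  -- `z ↦ z⁻¹` swaps the roles of `α` and `β`
  have h := (tendsto_mul_sub_inv_div_nhdsNE_zero (α := β) hα (inv_ne_zero hρ)).comp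
    tendsto_inv₀_cobounded'
  rw [inv_inv] at h
  refine h.congr fun z => ?_
  rw [Function.comp_apply, ← neg_div_neg_eq]
  congr 1 <;> simp only [mul_inv, inv_inv] <;> ring

end Limits

section SymPoch

variable {s ρ : ℂ}

lemma tendsto_symPoch_mul_div_symPoch_nhdsNE_zero (hs : s ≠ 0) (hρ : ρ ≠ 0) (m : ℕ) :
    Tendsto (fun z => symPoch s (ρ * z) m / symPoch s z m) (𝓝[≠] 0) (𝓝 (ρ⁻¹ ^ m)) := by
  simp only [symPoch_natCast, ← prod_div_distrib]
  have h := tendsto_finsetProd (range m) fun j _ =>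
    tendsto_mul_sub_inv_div_nhdsNE_zero (α := s ^ (j : ℤ)) (β := s ^ (-(j : ℤ)))
      (zpow_ne_zero _ hs) hρ
  rwa [prod_const, card_range] at h

lemma tendsto_symPoch_mul_div_symPoch_cobounded (hs : s ≠ 0) (hρ : ρ ≠ 0) (m : ℕ) :
    Tendsto (fun z => symPoch s (ρ * z) m / symPoch s z m) (cobounded ℂ) (𝓝 (ρ ^ m)) := by
  simp only [symPoch_natCast, ← prod_div_distrib]
  have h := tendsto_finsetProd (range m) fun j _ =>
    tendsto_mul_sub_inv_div_cobounded (α := s ^ (j : ℤ)) (β := s ^ (-(j : ℤ)))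
      (zpow_ne_zero _ hs) hρ
  rwa [prod_const, card_range] at h

end SymPoch

section Scaling

variable {C : ℂ} {e : ℝ}

lemma tendsto_mul_cpow_nhdsNE_zero (hC : C ≠ 0) (he : 0 < e) :
    Tendsto (fun σ : ℝ => C * (σ : ℂ) ^ (e : ℂ)) (𝓝[>] 0) (𝓝[≠] 0) := by
  refine tendsto_nhdsWithin_iff.mpr ⟨?_, ?_⟩
  · have hrpow : Tendsto (fun σ : ℝ => σ ^ e) (𝓝[>] 0) (𝓝 0) := by
      simpa [Real.zero_rpow he.ne'] using
        (Real.continuousAt_rpow_const 0 e (.inr he.le)).tendsto.mono_left nhdsWithin_le_nhds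
    rw [tendsto_zero_iff_norm_tendsto_zero]
    have hnorm : Tendsto (fun σ : ℝ => ‖C‖ * σ ^ e) (𝓝[>] 0) (𝓝 0) := by
      simpa using hrpow.const_mul ‖C‖
    refine hnorm.congr' ?_
    filter_upwards [self_mem_nhdsWithin] with σ (hσ : 0 < σ)
    rw [norm_mul, Complex.norm_cpow_eq_rpow_re_of_pos hσ, Complex.ofReal_re]
  · filter_upwards [self_mem_nhdsWithin] with σ (hσ : 0 < σ)
    simp [hC, hσ.ne']

lemma tendsto_mul_cpow_cobounded (hC : C ≠ 0) (he : e < 0) :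
    Tendsto (fun σ : ℝ => C * (σ : ℂ) ^ (e : ℂ)) (𝓝[>] 0) (cobounded ℂ) := by
  refine (tendsto_inv₀_nhdsNE_zero.comp
    (tendsto_mul_cpow_nhdsNE_zero (inv_ne_zero hC) (neg_pos.mpr he))).congr' ?_
  filter_upwards [self_mem_nhdsWithin] with σ (hσ : 0 < σ)
  simp [Complex.cpow_neg, mul_comm]

lemma cpow_mul_div_cpow_mul {σ : ℝ} (hσ : 0 < σ) (p q : ℝ) (u v : ℂ) :
    (σ : ℂ) ^ (p : ℂ) * u / ((σ : ℂ) ^ (q : ℂ) * v) =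
      u / v * (σ : ℂ) ^ ((p - q : ℝ) : ℂ) := by
  have hσ' : (σ : ℂ) ≠ 0 := by exact_mod_cast hσ.ne'
  rw [Complex.ofReal_sub, Complex.cpow_sub _ _ hσ']
  field_simp

end Scaling

section ScaledRatio

variable {s ρ c u v : ℂ} {p q : ℝ}

lemma tendsto_symPoch_cpow_ratio_of_lt (hs : s ≠ 0) (hρ : ρ ≠ 0) (hc : c ≠ 0) (hu : u ≠ 0)
    (hv : v ≠ 0) (hqp : q < p) (m : ℕ) :
    Tendsto (fun σ : ℝ =>
      symPoch s (ρ * c * ((σ : ℂ) ^ (p : ℂ) * u) / ((σ : ℂ) ^ (q : ℂ) * v)) m /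
        symPoch s (c * ((σ : ℂ) ^ (p : ℂ) * u) / ((σ : ℂ) ^ (q : ℂ) * v)) m)
      (𝓝[>] 0) (𝓝 (ρ⁻¹ ^ m)) := by
  refine ((tendsto_symPoch_mul_div_symPoch_nhdsNE_zero hs hρ m).comp
    (tendsto_mul_cpow_nhdsNE_zero (mul_ne_zero hc (div_ne_zero hu hv)) (sub_pos.mpr hqp))).congr'
    ?_
  filter_upwards [self_mem_nhdsWithin] with σ (hσ : 0 < σ)
  simp only [Function.comp_apply, mul_div_assoc, cpow_mul_div_cpow_mul hσ, mul_assoc]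

lemma tendsto_symPoch_cpow_ratio_of_gt (hs : s ≠ 0) (hρ : ρ ≠ 0) (hc : c ≠ 0) (hu : u ≠ 0)
    (hv : v ≠ 0) (hpq : p < q) (m : ℕ) :
    Tendsto (fun σ : ℝ =>
      symPoch s (ρ * c * ((σ : ℂ) ^ (p : ℂ) * u) / ((σ : ℂ) ^ (q : ℂ) * v)) m /
        symPoch s (c * ((σ : ℂ) ^ (p : ℂ) * u) / ((σ : ℂ) ^ (q : ℂ) * v)) m)
      (𝓝[>] 0) (𝓝 (ρ ^ m)) := by
  refine ((tendsto_symPoch_mul_div_symPoch_cobounded hs hρ m).comp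
    (tendsto_mul_cpow_cobounded (mul_ne_zero hc (div_ne_zero hu hv)) (sub_neg.mpr hpq))).congr'
    ?_
  filter_upwards [self_mem_nhdsWithin] with σ (hσ : 0 < σ)
  simp only [Function.comp_apply, mul_div_assoc, cpow_mul_div_cpow_mul hσ, mul_assoc]

end ScaledRatio

lemma prod_zpow_eq_zpow_sum₀ {G₀ ι : Type*} [CommGroupWithZero G₀] {r : G₀} (hr : r ≠ 0)
    (t : Finset ι) (f : ι → ℤ) : ∏ i ∈ t, r ^ f i = r ^ ∑ i ∈ t, f i := by
  induction t using Finset.cons_induction with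
  | empty => simp
  | cons i t hi ih => rw [prod_cons, sum_cons, zpow_add₀ hr, ih]

lemma sum_compl_ite_lt {n : ℕ} (i : Fin n) (m : ℤ) :
    ∑ j ∈ ({i}ᶜ : Finset (Fin n)), (if i < j then m else -m) =
      ((n : ℤ) - 1 - 2 * i) * m := by
  have hgt : ({i}ᶜ : Finset (Fin n)).filter (i < ·) = Ioi i := by
    ext j
    simpa using fun h : i < j => h.ne'
  have hlt : ({i}ᶜ : Finset (Fin n)).filter (¬ i < ·) = Iio i := by
    ext j
    simp only [mem_filter, mem_compl, mem_singleton, mem_Iio, not_lt]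
    exact ⟨fun h => lt_of_le_of_ne h.2 h.1, fun h => ⟨h.ne, h.le⟩⟩
  have hi := i.isLt
  rw [sum_ite, hgt, hlt, sum_const, sum_const, Fin.card_Ioi, Fin.card_Iio, nsmul_eq_mul,
    nsmul_eq_mul, Nat.cast_sub (by omega : (i : ℕ) ≤ n - 1), Nat.cast_sub (by omega : 1 ≤ n)]
  push_cast
  ring

theorem U_asymptotics_general (n : ℕ) (s r : ℂ)
    (hs : s ≠ 0) (hr : r ≠ 0)
    (w x : Fin n → ℂ) (hw : ∀ i, w i ≠ 0) (hx : ∀ a, x a ≠ 0)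
    (k : Fin n → ℕ) (a b : Fin n → ℝ)
    (ha : ∀ i j : Fin n, i < j → a j < a i)
    (hab : ∀ i j : Fin n, b i < a j) :
    Filter.Tendsto
      (fun σ : ℝ => Ufun n s r
        (fun i => ((σ : ℂ) ^ (((a i / 2 : ℝ)) : ℂ)) * w i)
        (fun i => ((σ : ℂ) ^ (((b i / 2 : ℝ)) : ℂ)) * x i) k)
      (nhdsWithin 0 (Set.Ioi 0))
      (nhds ((∏ i, symPoch s (s * r) (k i) / symPoch s s (k i)) *
        r ^ (∑ i : Fin n, ((n : ℤ) - 1 - 2 * (i : ℤ)) * (k i : ℤ)) *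
        r ^ (-(n : ℤ) * ∑ i : Fin n, (k i : ℤ)))) := by
  have hlim : r ^ (∑ i : Fin n, ((n : ℤ) - 1 - 2 * (i : ℤ)) * (k i : ℤ)) *
      r ^ (-(n : ℤ) * ∑ i : Fin n, (k i : ℤ)) =
      (∏ i, ∏ j ∈ ({i}ᶜ : Finset (Fin n)), r ^ (if i < j then (k i : ℤ) else -(k i : ℤ))) *
      ∏ _c : Fin n, ∏ j, r ^ (-(k j : ℤ)) := by
    simp only [prod_zpow_eq_zpow_sum₀ hr, sum_compl_ite_lt, sum_neg_distrib, sum_const,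
      card_univ, Fintype.card_fin, nsmul_eq_mul, neg_mul]
  have hneg : ∀ m : ℕ, r ^ (-(m : ℤ)) = r⁻¹ ^ m := fun m => by
    rw [zpow_neg, zpow_natCast, inv_pow]
  rw [mul_assoc, hlim, ← mul_assoc]
  refine (tendsto_const_nhds.mul (tendsto_finsetProd _ fun i _ =>
    tendsto_finsetProd _ fun j hj => ?_)).mul
    (tendsto_finsetProd _ fun c _ => tendsto_finsetProd _ fun j _ => ?_)
  · have hne : i ≠ j := by simpa [eq_comm] using hj
    rcases hne.lt_or_gt with hij | hji
    · rw [if_pos hij, zpow_natCast]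
      simpa only [inv_inv] using tendsto_symPoch_cpow_ratio_of_lt hs (inv_ne_zero hr)
        (zpow_ne_zero _ hs) (hw i) (hw j) (by linarith [ha i j hij]) (k i)
    · rw [if_neg hji.not_gt, hneg]
      exact tendsto_symPoch_cpow_ratio_of_gt hs (inv_ne_zero hr) (zpow_ne_zero _ hs) (hw i)
        (hw j) (by linarith [ha j i hji]) (k i)
  · rw [hneg]
    simpa only [mul_one, one_mul] using tendsto_symPoch_cpow_ratio_of_lt (c := 1) hs hr
      one_ne_zero (hw j) (hx c) (by linarith [hab c j]) (k j)

/-- Asymptotics of `U_k` in the zone `u₁ ≪ u₂ ≪ … ≪ u_n ≪ v_n ≪ … ≪ v₁`: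
along the scaling `u_i ↦ σ^{a_i} u_i`, `v_a ↦ σ^{b_a} v_a`, `σ → 0⁺` with
`a₁ > … > a_n > b_n > … > b₁`, the summand `U_k` tends to
`∏_i [qt;q]_{k_i}/[q;q]_{k_i} · t^{(1/2)Σ_i (n+1-2i) k_i} · t^{-nK/2}`
(written via `r = t^{1/2}`), independently of `u, v`. -/
theorem U_asymptotics (n : ℕ) (s r : ℂ) (hq : ‖s ^ 2‖ < 1)
    (hs : s ≠ 0) (hr : r ≠ 0)
    (w x : Fin n → ℂ) (hw : ∀ i, w i ≠ 0) (hx : ∀ a, x a ≠ 0)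
    (k : Fin n → ℕ) (a b : Fin n → ℝ)
    (ha : ∀ i j : Fin n, i < j → a j < a i)
    (hb : ∀ i j : Fin n, i < j → b i < b j)
    (hab : ∀ i j : Fin n, b i < a j) :
    Filter.Tendsto
      (fun σ : ℝ => Ufun n s r
        (fun i => ((σ : ℂ) ^ (((a i / 2 : ℝ)) : ℂ)) * w i)
        (fun i => ((σ : ℂ) ^ (((b i / 2 : ℝ)) : ℂ)) * x i) k)
      (nhdsWithin 0 (Set.Ioi 0))
      (nhds ((∏ i, symPoch s (s * r) (k i) / symPoch s s (k i)) *
        r ^ (∑ i : Fin n, ((n : ℤ) - 1 - 2 * (i : ℤ)) * (k i : ℤ)) *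
        r ^ (-(n : ℤ) * ∑ i : Fin n, (k i : ℤ)))) :=
  U_asymptotics_general n s r hs hr w x hw hx k a b ha hab
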